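/- Let GCP be a diameter of an ellipse through its center C, v a point on segment GP, and Q a point on the ellipse with Qv parallel to the tangent at P. Let DCK be the diameter parallel to the tangent at P. Then (Gv·vP)/(Qv)² = (PC)²/(DC)², where DC is the semi-length of the conjugate diameter. -/

import Mathlib

/-!
Let `b` be the bilinear form of the ellipse, `v = c • P`, `Q = v + s • w` and `D = r • w`.
Differentiating `b (γ t) (γ t) = 1` at `t₀` shows that `w` is conjugate to `P`. Expanding
`b Q Q = 1` then gives `s² b w w = 1 - c²`, while `b D D = 1` gives `r² b w w = 1`, so
`Qv² / DC² = 1 - c² = Gv · vP / PC²`.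
-/

open ContinuousLinearMap

theorem LinearMap.sq_eq_one_sub_sq_mul_sq_of_conjugate {R M : Type*} [CommRing R] [AddCommGroup M]
    [Module R M] (B : M →ₗ[R] M →ₗ[R] R) {P w : M} {c s r : R}
    (hP : B P P = 1) (hPw : B P w + B w P = 0)
    (hQ : B (c • P + s • w) (c • P + s • w) = 1) (hD : B (r • w) (r • w) = 1) :
    s ^ 2 = (1 - c ^ 2) * r ^ 2 := by
  simp only [map_add, map_smul, LinearMap.add_apply, LinearMap.smul_apply, smul_eq_mul] at hQ hD
  linear_combination r ^ 2 * hQ - s ^ 2 * hD - r ^ 2 * c ^ 2 * hP - r ^ 2 * c * s * hPw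

theorem ContinuousLinearMap.apply_add_apply_eq_zero_of_hasDerivAt {E : Type*}
    [NormedAddCommGroup E] [NormedSpace ℝ E] (B : E →L[ℝ] E →L[ℝ] ℝ) {γ : ℝ → E} {w : E}
    {t₀ : ℝ} (hγ : ∀ t, B (γ t) (γ t) = 1) (hderiv : HasDerivAt γ w t₀) :
    B (γ t₀) w + B w (γ t₀) = 0 := by
  have hconst : (fun t => B (γ t) (γ t)) = fun _ => 1 := funext hγ
  have h := B.hasDerivAt_of_bilinear (fun _ => hderiv) (fun _ => hderiv)
  rw [hconst] at h
  exact h.unique (hasDerivAt_const t₀ 1)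

theorem exists_eq_smul_and_dist_mul_dist_of_wbtw_neg {E : Type*} [NormedAddCommGroup E]
    [NormedSpace ℝ E] {P v : E} (h : Wbtw ℝ (-P) v P) :
    ∃ c : ℝ, v = c • P ∧ dist (-P) v * dist v P = (1 - c ^ 2) * ‖P‖ ^ 2 := by
  obtain ⟨t, ⟨ht₀, ht₁⟩, rfl⟩ := h
  have hv : AffineMap.lineMap (-P) P t = (2 * t - 1) • P := by
    simp only [AffineMap.lineMap_apply, vsub_eq_sub, vadd_eq_add, sub_neg_eq_add]
    module
  refine ⟨2 * t - 1, hv, ?_⟩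
  rw [hv, dist_eq_norm, dist_eq_norm, show -P - (2 * t - 1) • P = (-(2 * t)) • P by module,
    show (2 * t - 1) • P - P = (-(2 - 2 * t)) • P by module, norm_smul, norm_smul, norm_neg,
    norm_neg, Real.norm_of_nonneg (by linarith), Real.norm_of_nonneg (by linarith)]
  ring

noncomputable def ellipseForm (A B : ℝ) :
    EuclideanSpace ℝ (Fin 2) →L[ℝ] EuclideanSpace ℝ (Fin 2) →L[ℝ] ℝ :=
  (A ^ 2)⁻¹ • bilinearComp (mul ℝ ℝ) (EuclideanSpace.proj 0) (EuclideanSpace.proj 0) +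
    (B ^ 2)⁻¹ • bilinearComp (mul ℝ ℝ) (EuclideanSpace.proj 1) (EuclideanSpace.proj 1)

theorem ellipseForm_apply_self (A B : ℝ) (x : EuclideanSpace ℝ (Fin 2)) :
    ellipseForm A B x x = (x 0 / A) ^ 2 + (x 1 / B) ^ 2 := by
  simp only [ellipseForm, add_apply, smul_apply, bilinearComp_apply, PiLp.proj_apply, mul_apply',
    smul_eq_mul]
  ring

theorem ellipse_conjugate_diameter_ratio_general
    (A B : ℝ)
    (P G v Q D : EuclideanSpace ℝ (Fin 2))
    (hP : (P 0 / A) ^ 2 + (P 1 / B) ^ 2 = 1)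
    (hG : G = -P)
    (γ : ℝ → EuclideanSpace ℝ (Fin 2)) (t₀ : ℝ) (w : EuclideanSpace ℝ (Fin 2))
    (hγp : γ t₀ = P) (hderiv : HasDerivAt γ w t₀)
    (hγ : ∀ t, (γ t 0 / A) ^ 2 + (γ t 1 / B) ^ 2 = 1)
    (hv : Wbtw ℝ G v P)
    (hQ₁ : (Q 0 / A) ^ 2 + (Q 1 / B) ^ 2 = 1)
    (hQ₂ : ∃ s : ℝ, Q - v = s • w) (hQv : Q ≠ v)
    (hD₁ : (D 0 / A) ^ 2 + (D 1 / B) ^ 2 = 1)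
    (hD₂ : ∃ s : ℝ, D = s • w) :
    (dist G v * dist v P) / dist Q v ^ 2
      = dist P (0 : EuclideanSpace ℝ (Fin 2)) ^ 2 / dist D (0 : EuclideanSpace ℝ (Fin 2)) ^ 2 := by
  subst hG hγp
  obtain ⟨s, hs⟩ := hQ₂
  obtain ⟨r, rfl⟩ := hD₂
  obtain ⟨c, rfl, hpow⟩ := exists_eq_smul_and_dist_mul_dist_of_wbtw_neg hv
  have hQ : Q = c • γ t₀ + s • w := eq_add_of_sub_eq' hs
  simp only [← ellipseForm_apply_self] at hP hγ hQ₁ hD₁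
  have htangent := (ellipseForm A B).apply_add_apply_eq_zero_of_hasDerivAt hγ hderiv
  have hchord := (ellipseForm A B).toLinearMap₁₂.sq_eq_one_sub_sq_mul_sq_of_conjugate hP
    htangent (hQ ▸ hQ₁) hD₁
  have hs₀ : s ≠ 0 := by
    rintro rfl
    exact hQv (sub_eq_zero.mp (by simpa using hs))
  have hc : 1 - c ^ 2 ≠ 0 := by
    rintro hc
    simp [hc, hs₀] at hchord
  rw [hpow, dist_eq_norm Q, hs, dist_zero_right, dist_zero_right, norm_smul, norm_smul, mul_pow,
    mul_pow, Real.norm_eq_abs, Real.norm_eq_abs, sq_abs, sq_abs, hchord, mul_assoc,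
    mul_div_mul_left _ _ hc]

/-- Newton's lemma on conjugate diameters.  The ellipse has center `C = 0` and semi-axes
`A, B > 0`; `P` is on the ellipse and `G = -P` is its antipode, so `GCP` is a diameter.
The tangent at `P` is encoded by a differentiable curve `γ` in the ellipse with
`γ t₀ = P` and nonzero velocity `w`.  `v` lies on the segment `GP`, `Q` is a point of
the ellipse with `Qv` parallel to the tangent at `P`, and `D` is an endpoint of the
diameter through the center parallel to the tangent at `P`.  Then
`(Gv · vP)/(Qv)² = (PC)²/(DC)²`. -/
theorem ellipse_conjugate_diameter_ratio
    (A B : ℝ) (hA : 0 < A) (hB : 0 < B)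
    (P G v Q D : EuclideanSpace ℝ (Fin 2))
    (hP : (P 0 / A) ^ 2 + (P 1 / B) ^ 2 = 1)
    (hG : G = -P)
    (γ : ℝ → EuclideanSpace ℝ (Fin 2)) (t₀ : ℝ) (w : EuclideanSpace ℝ (Fin 2))
    (hγp : γ t₀ = P) (hw : w ≠ 0) (hderiv : HasDerivAt γ w t₀)
    (hγ : ∀ t, (γ t 0 / A) ^ 2 + (γ t 1 / B) ^ 2 = 1)
    (hv : Wbtw ℝ G v P)
    (hQ₁ : (Q 0 / A) ^ 2 + (Q 1 / B) ^ 2 = 1)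
    (hQ₂ : ∃ s : ℝ, Q - v = s • w) (hQv : Q ≠ v)
    (hD₁ : (D 0 / A) ^ 2 + (D 1 / B) ^ 2 = 1)
    (hD₂ : ∃ s : ℝ, D = s • w) :
    (dist G v * dist v P) / dist Q v ^ 2
      = dist P (0 : EuclideanSpace ℝ (Fin 2)) ^ 2 / dist D (0 : EuclideanSpace ℝ (Fin 2)) ^ 2 :=
  ellipse_conjugate_diameter_ratio_general A B P G v Q D hP hG γ t₀ w hγp hderiv hγ hv hQ₁ hQ₂ hQv
    hD₁ hD₂
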